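/- Let m ≥ 1, A_m ∈ ℝ^{m×m} the upper shift matrix, c_m the first standard basis vector, l_i(ω) = binom(m,i)·ω^i, and M(ω) = A_m − l(ω)·c_m^⊤. Then for every ω ∈ ℝ the spectrum of M(ω) (over ℂ, i.e. the set of eigenvalues of the complexified matrix) is exactly the singleton {−ω}; in particular every eigenvalue of the bandwidth-parametrized observer error matrix equals −ω, so for ω > 0 the matrix is Hurwitz. -/

import Mathlib

open Matrix

/-- The `m × m` upper shift matrix: ones on the superdiagonal, zeros elsewhere. -/
noncomputable def shiftMat (m : ℕ) : Matrix (Fin m) (Fin m) ℝ :=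
  Matrix.of fun i j => if (i : ℕ) + 1 = (j : ℕ) then 1 else 0

/-- The first standard basis vector of `ℝ^m`. -/
noncomputable def firstBasis (m : ℕ) : Fin m → ℝ :=
  fun i => if (i : ℕ) = 0 then 1 else 0

/-- Bandwidth-parametrized observer gain: `l_i(ω) = binom(m,i)·ω^i` for `i = 1,…,m`. -/
noncomputable def obsGain (m : ℕ) (ω : ℝ) : Fin m → ℝ :=
  fun i => (m.choose ((i : ℕ) + 1)) * ω ^ ((i : ℕ) + 1)

/-- The ESO error matrix `M(ω) = A_m − l(ω)·c_m^⊤`. -/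
noncomputable def esoMat (m : ℕ) (ω : ℝ) : Matrix (Fin m) (Fin m) ℝ :=
  shiftMat m - Matrix.vecMulVec (obsGain m ω) (firstBasis m)

/-!
`M(ω)` is in companion form: expanding `det (X • 1 - M)` along its first row gives the
characteristic polynomial `X ^ m + ∑ l_i X ^ (m - i)`, which by the binomial theorem is
`(X + ω) ^ m`. Its only root is `-ω`.
-/

open Polynomial

section Pencil

variable {R : Type*} [CommRing R]

/-- `x • 1 - A_n` with its first column replaced by `v`. -/
def pencilWithFirstCol {n : ℕ} (x : R) (v : Fin n → R) : Matrix (Fin n) (Fin n) R :=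
  of fun i j => if (j : ℕ) = 0 then v i else if i = j then x else if (i : ℕ) + 1 = j then -1 else 0

theorem det_pencilWithFirstCol (x : R) {n : ℕ} (v : Fin (n + 1) → R) :
    (pencilWithFirstCol x v).det = ∑ i, v i * x ^ (n - i) := by
  induction n with
  | zero => simp [pencilWithFirstCol]
  | succ k ih =>
    -- Row 0 is `(v 0, -1, 0, …, 0)`, and both minors that survive have the same shape.
    have minor₀ : (pencilWithFirstCol x v).submatrix Fin.succ (Fin.succAbove 0) =
        pencilWithFirstCol x (Pi.single 0 x) := by
      ext i j
      rcases Fin.eq_zero_or_eq_succ j with rfl | ⟨j, rfl⟩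
      · simp [pencilWithFirstCol, Pi.single_apply]
        simp_rw [← Fin.succ_zero_eq_one', Fin.succ_inj]
      · simp [pencilWithFirstCol]
    have minor₁ : (pencilWithFirstCol x v).submatrix Fin.succ (Fin.succAbove 1) =
        pencilWithFirstCol x (v ∘ Fin.succ) := by
      ext i j
      rcases Fin.eq_zero_or_eq_succ j with rfl | ⟨j, rfl⟩ <;> simp [pencilWithFirstCol]
    rw [det_succ_row_zero, Fin.sum_univ_succ, Fin.sum_univ_succ, Fin.succ_zero_eq_one, minor₀,
      minor₁, ih, ih]
    simp [pencilWithFirstCol, Pi.single_apply, eq_comm (a := (0 : Fin _))]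
    rw [Fin.sum_univ_succ (n := k + 1)]
    simp only [Fin.val_zero, Fin.val_succ, Nat.sub_zero, Nat.add_sub_add_right, pow_succ']

end Pencil

theorem charmatrix_shiftMat_sub_vecMulVec_firstBasis {n : ℕ} (a : Fin (n + 1) → ℝ) :
    charmatrix (shiftMat (n + 1) - vecMulVec a (firstBasis (n + 1))) =
      pencilWithFirstCol X ((Pi.single 0 X : Fin (n + 1) → ℝ[X]) + fun i => C (a i)) := by
  ext i j : 1
  rcases Fin.eq_zero_or_eq_succ j with rfl | ⟨j, rfl⟩
  · simp [charmatrix_apply, vecMulVec_apply, shiftMat, firstBasis, pencilWithFirstCol,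
      diagonal_apply, Pi.single_apply]
  · simp [charmatrix_apply, vecMulVec_apply, shiftMat, firstBasis, pencilWithFirstCol,
      diagonal_apply]
    split_ifs <;> simp_all

theorem charpoly_shiftMat_sub_vecMulVec_firstBasis {n : ℕ} (a : Fin (n + 1) → ℝ) :
    (shiftMat (n + 1) - vecMulVec a (firstBasis (n + 1))).charpoly =
      X ^ (n + 1) + ∑ i, C (a i) * X ^ (n - i) := by
  rw [charpoly, charmatrix_shiftMat_sub_vecMulVec_firstBasis, det_pencilWithFirstCol]
  simp [add_mul, Finset.sum_add_distrib, Pi.single_apply, pow_succ']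

theorem charpoly_esoMat (m : ℕ) (ω : ℝ) : (esoMat m ω).charpoly = (X + C ω) ^ m := by
  rcases m with _ | n
  · exact charpoly_isEmpty
  rw [esoMat, charpoly_shiftMat_sub_vecMulVec_firstBasis, add_comm X, add_pow,
    Finset.sum_range_succ', ← Fin.sum_univ_eq_sum_range]
  simp only [obsGain, map_mul, map_natCast, map_pow, Nat.add_sub_add_right, pow_zero,
    Nat.choose_zero_right, Nat.cast_one, one_mul, mul_one, Nat.sub_zero]
  rw [add_comm (X ^ (n + 1))]
  exact congrArg (· + _) (Finset.sum_congr rfl fun i _ => by ring)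

/-- For every `ω ∈ ℝ` the spectrum over `ℂ` of the bandwidth-parametrized ESO error matrix
`M(ω) = A_m − l(ω)·c_m^⊤` is exactly the singleton `{−ω}`. -/
theorem eso_spectrum (m : ℕ) (hm : 1 ≤ m) (ω : ℝ) :
    spectrum ℂ ((esoMat m ω).map (algebraMap ℝ ℂ)) = {(-(ω : ℂ))} := by
  ext μ
  rw [Set.mem_singleton_iff, mem_spectrum_iff_isRoot_charpoly, charpoly_map, charpoly_esoMat]
  simp [pow_eq_zero_iff (n := m) (by omega), add_eq_zero_iff_eq_neg]
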